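/- arXiv:1210.3140 — 2 statements merged into one kernel-verified Lean document; each statement's English description precedes it below -/
import Mathlib

section
/- Under the kinematic equations for rolling the Lorentzian sphere, rolling realizes tangent parallel transport: if Y0 ∈ ℝ^{m+1} satisfies ⟨Y0,x0⟩_J = 0, then the vector field Y(t) := R(t) Y0 along the rolling curve x(t) := R(t) x0 satisfies ⟨Y(t), x(t)⟩_J = 0 and its tangential covariant derivative vanishes, i.e. Y′(t) − ⟨Y′(t), x(t)⟩_J · x(t) = 0 for all t. -/
/-!
Since `R(t)` is a `J`-isometry, `Y(t)` stays `J`-orthogonal to `x(t)`. Differentiating,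
`Y′ = R(t) A Y0` with `A = (u x0ᵗ − x0 uᵗ) J`, and `⟨x0, Y0⟩_J = 0` collapses `A Y0`
to `−⟨u, Y0⟩_J x0`. Hence `Y′` is a multiple of `x(t)`, which has `J`-norm `1`, so its
tangential part vanishes.
-/

open Matrix

noncomputable section

/-- `J = diag(-1, I_m)` on `ℝ^{m+1}`. -/
def lorJ (m : ℕ) : Matrix (Fin (m+1)) (Fin (m+1)) ℝ :=
  Matrix.diagonal (fun i => if i = 0 then (-1 : ℝ) else 1)

/-- The scalar product `⟨x,y⟩_J = xᵗ J y`. -/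
def lorIp {m : ℕ} (x y : Fin (m+1) → ℝ) : ℝ :=
  x ⬝ᵥ (lorJ m) *ᵥ y

theorem Matrix.hasDerivAt_mulVec_const {𝕜 ι κ : Type*} [NontriviallyNormedField 𝕜]
    [Fintype κ] {R : 𝕜 → Matrix ι κ 𝕜} {R' : Matrix ι κ 𝕜} {t : 𝕜}
    (hR : ∀ i j, HasDerivAt (fun s => R s i j) (R' i j) t) (v : κ → 𝕜) :
    HasDerivAt (fun s => R s *ᵥ v) (R' *ᵥ v) t := by
  rw [hasDerivAt_pi]
  intro i
  simpa only [mulVec, dotProduct] using HasDerivAt.fun_sum fun j _ => (hR i j).mul_const (v j)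

section Lorentz

variable {m : ℕ}

lemma lorJ_transpose (m : ℕ) : (lorJ m)ᵀ = lorJ m :=
  diagonal_transpose _

lemma lorIp_comm (x y : Fin (m+1) → ℝ) : lorIp x y = lorIp y x := by
  rw [lorIp, dotProduct_mulVec, ← mulVec_transpose, lorJ_transpose, dotProduct_comm, lorIp]

lemma lorIp_smul_left (c : ℝ) (x y : Fin (m+1) → ℝ) : lorIp (c • x) y = c * lorIp x y :=
  smul_dotProduct c x _

lemma lorIp_mulVec_mulVec {R : Matrix (Fin (m+1)) (Fin (m+1)) ℝ}
    (hR : Rᵀ * lorJ m * R = lorJ m) (x y : Fin (m+1) → ℝ) :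
    lorIp (R *ᵥ x) (R *ᵥ y) = lorIp x y := by
  rw [lorIp, ← vecMul_transpose, ← dotProduct_mulVec, mulVec_mulVec,
    mulVec_mulVec, hR, lorIp]

lemma vecMulVec_sub_vecMulVec_mul_lorJ_mulVec {u x Y : Fin (m+1) → ℝ} (hY : lorIp Y x = 0) :
    ((vecMulVec u x - vecMulVec x u) * lorJ m) *ᵥ Y = -lorIp u Y • x := by
  have hxY : lorIp x Y = 0 := by rw [lorIp_comm, hY]
  rw [← mulVec_mulVec, sub_mulVec, vecMulVec_mulVec, vecMulVec_mulVec, op_smul_eq_smul,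
    op_smul_eq_smul]
  change lorIp x Y • u - lorIp u Y • x = _
  rw [hxY, zero_smul, zero_sub, neg_smul]

lemma smul_sub_lorIp_smul_eq_zero {x : Fin (m+1) → ℝ} (hx : lorIp x x = 1) (c : ℝ) :
    c • x - lorIp (c • x) x • x = 0 := by
  rw [lorIp_smul_left, hx, mul_one, sub_self]

end Lorentz

theorem rolling_realizes_tangent_parallel_transport_general (m : ℕ)
    (x0 : Fin (m+1) → ℝ) (hx0 : lorIp x0 x0 = 1)
    (u : ℝ → Fin (m+1) → ℝ)
    (R : ℝ → Matrix (Fin (m+1)) (Fin (m+1)) ℝ)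
    (hR : ∀ t i j, HasDerivAt (fun s => R s i j)
      ((R t * ((vecMulVec (u t) x0 - vecMulVec x0 (u t)) * lorJ m)) i j) t)
    (hRJ : ∀ t, (R t)ᵀ * lorJ m * R t = lorJ m)
    (Y0 : Fin (m+1) → ℝ) (hY0 : lorIp Y0 x0 = 0) :
    ∀ t,
      lorIp (R t *ᵥ Y0) (R t *ᵥ x0) = 0 ∧
      deriv (fun s => R s *ᵥ Y0) t
        - lorIp (deriv (fun s => R s *ᵥ Y0) t) (R t *ᵥ x0) • (R t *ᵥ x0) = 0 := by
  intro t
  have hxt : lorIp (R t *ᵥ x0) (R t *ᵥ x0) = 1 := by rw [lorIp_mulVec_mulVec (hRJ t), hx0]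
  refine ⟨by rw [lorIp_mulVec_mulVec (hRJ t), hY0], ?_⟩
  rw [(hasDerivAt_mulVec_const (hR t) Y0).deriv, ← mulVec_mulVec,
    vecMulVec_sub_vecMulVec_mul_lorJ_mulVec hY0, mulVec_smul]
  exact smul_sub_lorIp_smul_eq_zero hxt _

/-- Rolling the Lorentzian sphere realizes tangent parallel transport: if
`⟨Y0,x0⟩_J = 0`, then `Y(t) := R(t) Y0` along the rolling curve `x(t) := R(t) x0`
satisfies `⟨Y(t),x(t)⟩_J = 0` and `Y′(t) − ⟨Y′(t),x(t)⟩_J • x(t) = 0`. -/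
theorem rolling_realizes_tangent_parallel_transport (m : ℕ)
    (x0 : Fin (m+1) → ℝ) (hx0 : lorIp x0 x0 = 1)
    (u : ℝ → Fin (m+1) → ℝ) (hucont : Continuous u)
    (hu : ∀ t, lorIp (u t) x0 = 0)
    (R : ℝ → Matrix (Fin (m+1)) (Fin (m+1)) ℝ)
    (hR : ∀ t i j, HasDerivAt (fun s => R s i j)
      ((R t * ((vecMulVec (u t) x0 - vecMulVec x0 (u t)) * lorJ m)) i j) t)
    (hRJ : ∀ t, (R t)ᵀ * lorJ m * R t = lorJ m)
    (Y0 : Fin (m+1) → ℝ) (hY0 : lorIp Y0 x0 = 0) :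
    ∀ t,
      lorIp (R t *ᵥ Y0) (R t *ᵥ x0) = 0 ∧
      deriv (fun s => R s *ᵥ Y0) t
        - lorIp (deriv (fun s => R s *ᵥ Y0) t) (R t *ᵥ x0) • (R t *ᵥ x0) = 0 :=
  rolling_realizes_tangent_parallel_transport_general m x0 hx0 u R hR hRJ Y0 hY0
end
end

section
/- Let x0, x1 be distinct points of ℝ^{m+1} with ⟨x0,x0⟩_J = ⟨x1,x1⟩_J = 1. Then x1 is reachable from x0 by a null (lightlike) geodesic — i.e. there exist u ≠ 0 with ⟨u,u⟩_J = 0, ⟨u,x0⟩_J = 0 and t > 0 such that x0 + t·u = x1 — if and only if ⟨x0,x1⟩_J = 1 (equivalently, if and only if x1 lies on the affine tangent hyperplane of S_1^m at x0). -/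
open Matrix Real

noncomputable section

/-!
A line `x + t • u` with `B u x = 0` stays in the affine hyperplane `{y | B x y = B x x}`.
Conversely, if `y ≠ x` lies on that hyperplane and on the same level set `B y y = B x x`,
then `u := y - x` is a nonzero isotropic vector orthogonal to `x`, reaching `y` at `t = 1`.
-/

namespace LinearMap.BilinForm

variable {R V : Type*} [CommRing R] [AddCommGroup V] [Module R V] {B : LinearMap.BilinForm R V}

lemma apply_add_smul_of_apply_eq_zero (hB : B.IsSymm) {x u : V} (hux : B u x = 0) (t : R) :
    B x (x + t • u) = B x x := by
  rw [map_add, map_smul, hB.eq x u, hux, smul_zero, add_zero]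

lemma apply_sub_left_eq_zero (hB : B.IsSymm) {x y : V} (hxy : B x y = B x x) :
    B (y - x) x = 0 := by
  rw [map_sub, LinearMap.sub_apply, hB.eq y x, hxy, sub_self]

lemma apply_sub_sub_eq_zero (hB : B.IsSymm) {x y : V} (hyy : B y y = B x x)
    (hxy : B x y = B x x) : B (y - x) (y - x) = 0 := by
  simp only [map_sub, LinearMap.sub_apply, hB.eq y x, hyy, hxy, sub_self]

theorem exists_isotropic_orthogonal_ray_iff [LinearOrder R] [IsStrictOrderedRing R]
    (hB : B.IsSymm) {x y : V} (hyy : B y y = B x x) (hne : y ≠ x) :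
    (∃ u, u ≠ 0 ∧ B u u = 0 ∧ B u x = 0 ∧ ∃ t : R, 0 < t ∧ x + t • u = y) ↔
      B x y = B x x := by
  constructor
  · rintro ⟨u, -, -, hux, t, -, rfl⟩
    exact apply_add_smul_of_apply_eq_zero hB hux t
  · intro hxy
    refine ⟨y - x, sub_ne_zero.mpr hne, apply_sub_sub_eq_zero hB hyy hxy,
      apply_sub_left_eq_zero hB hxy, 1, one_pos, ?_⟩
    rw [one_smul, add_sub_cancel]

end LinearMap.BilinForm

lemma lorIp_eq_toBilin' {m : ℕ} (x y : Fin (m+1) → ℝ) : lorIp x y = (lorJ m).toBilin' x y :=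
  (Matrix.toBilin'_apply' _ _ _).symm

lemma isSymm_toBilin'_lorJ (m : ℕ) : (lorJ m).toBilin'.IsSymm :=
  Matrix.isSymm_toBilin'_iff_isSymm.mpr (isSymm_diagonal _)

/-- For distinct `x0, x1 ∈ S_1^m`: `x1` is reachable from `x0` by a null geodesic
if and only if `⟨x0,x1⟩_J = 1`, i.e. iff `x1` lies on the affine tangent hyperplane
of `S_1^m` at `x0`. -/
theorem null_geodesic_reachability (m : ℕ) (x0 x1 : Fin (m+1) → ℝ)
    (hx0 : lorIp x0 x0 = 1) (hx1 : lorIp x1 x1 = 1) (hne : x1 ≠ x0) :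
    (∃ u : Fin (m+1) → ℝ, u ≠ 0 ∧ lorIp u u = 0 ∧ lorIp u x0 = 0 ∧
        ∃ t : ℝ, 0 < t ∧ x0 + t • u = x1) ↔
      lorIp x0 x1 = 1 := by
  simp only [lorIp_eq_toBilin'] at *
  rw [LinearMap.BilinForm.exists_isotropic_orthogonal_ray_iff (isSymm_toBilin'_lorJ m)
    (hx1.trans hx0.symm) hne, hx0]
end
end
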